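/- Assume Ω ∈ ℝ with −1 < Ω < 0. Then there exist ε₀ > 0, δ₀ > 0 and constants C₃ > 0, C₄ > 0, independent of ζ, ε, δ and of the admissible sequence, with the following property: for every admissible sequence (k_p)_{p∈ℤ}, every δ ∈ (0, δ₀], every ε ∈ (0, ε₀], and every ζ ∈ Ξ, there is at most one index p ∈ ℤ such that X_{k_p} ∈ Γ_{δ/|r_p|}(β_l), X_{k_{p−1}} ∈ Γ_{δ/|r_p|}(β_l), and neither |E_{i,j}(ε, k_p, k_{p−1})(ζ)| ≥ C₃ |X_{k_p}| / |r_p| nor |E_{i,j}(ε, k_p, k_{p−1})(ζ)| ≥ C₃ |X_{k_{p−1}}| holds; moreover, any such exceptional index p satisfies |X_{k_p}| ≤ C₄ |r_p| / ε. -/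

import Mathlib

noncomputable section

open scoped RealInnerProductSpace

/-- `ℝ³` with the Euclidean norm, coordinates `ζ = (σ, γ, η) = (ζ 0, ζ 1, ζ 2)`. -/
abbrev E3 : Type := EuclideanSpace ℝ (Fin 3)

/-- The frequency set `Ξ := {ζ ∈ ℝ³ : γ ≥ 0} \ {0}`. -/
def Xi : Set E3 := {ζ : E3 | 0 ≤ ζ 1 ∧ ζ ≠ 0}

/-- The cone `Γ_δ(β) := {ζ ∈ Ξ : |ζ/|ζ| − β| ≤ δ or |ζ/|ζ| + β| ≤ δ}`. -/
def cone (β : E3) (δ : ℝ) : Set E3 :=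
  {ζ : E3 | ζ ∈ Xi ∧ (‖‖ζ‖⁻¹ • ζ - β‖ ≤ δ ∨ ‖‖ζ‖⁻¹ • ζ + β‖ ≤ δ)}

/-- `X_k := ζ + (k/ε) β_l`. -/
def Xk (βl ζ : E3) (ε : ℝ) (k : ℤ) : E3 := ζ + (((k : ℝ)) / ε) • βl

/-- A bi-infinite integer sequence is admissible if it is strictly increasing or
strictly decreasing. -/
def Admissible (k : ℤ → ℤ) : Prop := StrictMono k ∨ StrictAnti k

/-- The oscillatory exponent `E_{i,j}(ε, k, k−r)(ζ) := ω_i(X_k) − (r/ε) ω_N(β_l) − ω_j(X_{k−r})`. -/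
def Eij (ωi ωj ωN : E3 → ℂ) (βl : E3) (ε : ℝ) (k r : ℤ) (ζ : E3) : ℂ :=
  ωi (Xk βl ζ ε k) - ((r : ℂ) / (ε : ℂ)) * ωN βl - ωj (Xk βl ζ ε (k - r))

/-!
On the cone `Γ_{δ/|r|}(β)` a vector `X` lies within `(δ/|r|)‖X‖` of its projection `u β`,
`u = ⟪X, β⟫`. By Lipschitz continuity and homogeneity along `β`, the phase `E_{i,j}` then equals
`(ω_i(β) - ω_j(β)) (u - (1 + Ω) s)`, `s = r/ε`, up to an error `O(δ (|u| + |u - s|) / |r|)`.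
So a small phase forces `u ≈ (1 + Ω) s`, and since `0 < 1 + Ω < 1` the projections `u` and
`u - s` of `X_{k_p}` and `X_{k_{p-1}}` have opposite signs, i.e. `-ε ⟪ζ, β⟫` lies strictly between
`k_{p-1}` and `k_p`. For a monotone sequence this happens for at most one `p`, and `|u| ≤ 2|s|`
gives `‖X_{k_p}‖ ≤ 4 |r_p| / ε`.
-/

open scoped NNReal

section InnerProductSpace

variable {E : Type*} [NormedAddCommGroup E] [InnerProductSpace ℝ E] {β : E}

theorem norm_sub_inner_smul_le_norm_sub_smul (hβ : ‖β‖ = 1) (X : E) (c : ℝ) :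
    ‖X - ⟪X, β⟫ • β‖ ≤ ‖X - c • β‖ := by
  have hpythagoras : ‖X - c • β‖ ^ 2 = ‖X - ⟪X, β⟫ • β‖ ^ 2 + (⟪X, β⟫ - c) ^ 2 := by
    simp only [norm_sub_sq_real, norm_smul, real_inner_smul_right, hβ, Real.norm_eq_abs,
      mul_pow, sq_abs]
    ring
  exact (sq_le_sq₀ (norm_nonneg _) (norm_nonneg _)).1
    (hpythagoras ▸ le_add_of_nonneg_right (sq_nonneg _))

end InnerProductSpace

section Cone

variable {β X : E3} {δ : ℝ}

theorem norm_sub_inner_smul_le_of_mem_cone (hβ : ‖β‖ = 1) (hX : X ∈ cone β δ) :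
    ‖X - ⟪X, β⟫ • β‖ ≤ δ * ‖X‖ := by
  obtain ⟨⟨-, hX0⟩, hcone⟩ := hX
  obtain ⟨c, hc⟩ : ∃ c : ℝ, ‖‖X‖⁻¹ • X - c • β‖ ≤ δ := by
    rcases hcone with h | h
    · exact ⟨1, by simpa using h⟩
    · exact ⟨-1, by simpa using h⟩
  have hscale : X - (‖X‖ * c) • β = ‖X‖ • (‖X‖⁻¹ • X - c • β) := by
    rw [smul_sub, smul_smul, mul_inv_cancel₀ (norm_ne_zero_iff.2 hX0), one_smul, smul_smul]
  calc ‖X - ⟪X, β⟫ • β‖ ≤ ‖X - (‖X‖ * c) • β‖ := norm_sub_inner_smul_le_norm_sub_smul hβ X _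
    _ = ‖X‖ * ‖‖X‖⁻¹ • X - c • β‖ := by rw [hscale, norm_smul, norm_norm]
    _ ≤ δ * ‖X‖ := by rw [mul_comm]; exact mul_le_mul_of_nonneg_right hc (norm_nonneg X)

theorem norm_le_two_mul_abs_inner_of_mem_cone (hβ : ‖β‖ = 1) (hδ : δ ≤ 1 / 2)
    (hX : X ∈ cone β δ) : ‖X‖ ≤ 2 * |⟪X, β⟫| := by
  have hproj := norm_sub_inner_smul_le_of_mem_cone hβ hX
  have htri : ‖X‖ ≤ |⟪X, β⟫| + ‖X - ⟪X, β⟫ • β‖ :=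
    calc ‖X‖ = ‖⟪X, β⟫ • β + (X - ⟪X, β⟫ • β)‖ := by rw [add_sub_cancel]
      _ ≤ |⟪X, β⟫| + ‖X - ⟪X, β⟫ • β‖ := by
        simpa [norm_smul, hβ] using norm_add_le (⟪X, β⟫ • β) (X - ⟪X, β⟫ • β)
  nlinarith [norm_nonneg X]

end Cone

theorem LipschitzWith.norm_sub_ofReal_mul_le {F : Type*} [SeminormedAddCommGroup F] [Module ℝ F]
    {K : ℝ≥0} {ω : F → ℂ} {β : F} (hω : LipschitzWith K ω)
    (hhom : ∀ s : ℝ, ω (s • β) = s * ω β) (X : F) (u : ℝ) :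
    ‖ω X - u * ω β‖ ≤ K * ‖X - u • β‖ := by
  simpa [← hhom, dist_eq_norm] using hω.dist_le_mul X (u • β)

theorem norm_sub_mul_abs_le_of_lipschitzWith {F : Type*} [SeminormedAddCommGroup F]
    [Module ℝ F] {K : ℝ≥0} {ωi ωj ωN : F → ℂ} {β : F} {Ω : ℝ}
    (hi : LipschitzWith K ωi) (hj : LipschitzWith K ωj)
    (hiHom : ∀ s : ℝ, ωi (s • β) = s * ωi β) (hjHom : ∀ s : ℝ, ωj (s • β) = s * ωj β)
    (hΩ : (Ω : ℂ) * (ωj β - ωi β) = ωi β - ωN β) (X : F) (u s : ℝ) :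
    ‖ωi β - ωj β‖ * |u - (1 + Ω) * s| ≤
      ‖ωi X - s * ωN β - ωj (X - s • β)‖ + K * (‖X - u • β‖ + ‖X - s • β - (u - s) • β‖) := by
  have hsplit : (ωi β - ωj β) * ((u - (1 + Ω) * s : ℝ) : ℂ) =
      (ωi X - s * ωN β - ωj (X - s • β)) + (u * ωi β - ωi X) +
        (ωj (X - s • β) - (u - s : ℝ) * ωj β) := by
    push_cast
    linear_combination s * hΩ
  calc ‖ωi β - ωj β‖ * |u - (1 + Ω) * s|
      = ‖(ωi β - ωj β) * ((u - (1 + Ω) * s : ℝ) : ℂ)‖ := by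
        rw [norm_mul, Complex.norm_real, Real.norm_eq_abs]
    _ ≤ ‖ωi X - s * ωN β - ωj (X - s • β)‖ + ‖ωi X - u * ωi β‖ +
          ‖ωj (X - s • β) - (u - s : ℝ) * ωj β‖ := by
        rw [hsplit, norm_sub_rev (ωi X)]
        exact norm_add₃_le
    _ ≤ _ := by
        rw [mul_add, ← add_assoc]
        gcongr
        · exact hi.norm_sub_ofReal_mul_le hiHom X u
        · exact hj.norm_sub_ofReal_mul_le hjHom _ _

theorem abs_le_and_mul_sub_neg_of_abs_sub_mul_le {Ω c ρ u s : ℝ} (hc : 0 ≤ c)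
    (hcΩ : 4 * c < min (1 + Ω) (-Ω)) (hρ : 1 ≤ ρ) (hs : s ≠ 0)
    (h : |u - (1 + Ω) * s| * ρ ≤ c * (|u| + |u - s|)) :
    |u| ≤ 2 * |s| ∧ u * (u - s) < 0 := by
  obtain ⟨hc₁, hc₂⟩ := lt_min_iff.1 hcΩ
  obtain ⟨w, hw⟩ : ∃ w, u - (1 + Ω) * s = w := ⟨_, rfl⟩
  rw [hw] at h
  have hΩs : |(1 + Ω) * s| ≤ |s| ∧ |Ω * s| ≤ |s| := by
    simp only [abs_mul]
    exact ⟨mul_le_of_le_one_left (abs_nonneg s) (abs_le.2 ⟨by linarith, by linarith⟩),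
      mul_le_of_le_one_left (abs_nonneg s) (abs_le.2 ⟨by linarith, by linarith⟩)⟩
  have hu : |u| ≤ |w| + |s| := by
    calc |u| = |w + (1 + Ω) * s| := by rw [← hw]; ring_nf
      _ ≤ |w| + |s| := (abs_add_le _ _).trans (by linarith)
  have hus : |u - s| ≤ |w| + |s| := by
    calc |u - s| = |w + Ω * s| := by rw [← hw]; ring_nf
      _ ≤ |w| + |s| := (abs_add_le _ _).trans (by linarith)
  -- `|w| ρ ≤ 2c (|w| + |s|)` with `ρ ≥ 1` and `c < 1/8` forces `w` to be small compared with `s`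
  have hw₄ : |w| ≤ 4 * c * |s| := by
    nlinarith [abs_nonneg w, abs_nonneg s, mul_le_mul_of_nonneg_left hρ (abs_nonneg w)]
  have hws : |w * s| ≤ 4 * c * s ^ 2 := by
    rw [abs_mul, ← sq_abs s]; nlinarith [abs_nonneg s]
  have hs2 : 0 < s ^ 2 := by positivity
  have hpos : 0 < u * s := by
    have : u * s = w * s + (1 + Ω) * s ^ 2 := by rw [← hw]; ring
    nlinarith [neg_abs_le (w * s)]
  have hneg : (u - s) * s < 0 := by
    have : (u - s) * s = w * s + Ω * s ^ 2 := by rw [← hw]; ring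
    nlinarith [le_abs_self (w * s)]
  refine ⟨by nlinarith [abs_nonneg s], ?_⟩
  nlinarith [mul_neg_of_pos_of_neg hpos hneg]

theorem norm_le_and_inner_mul_neg_of_mem_cone {K : ℝ≥0} {ωi ωj ωN : E3 → ℂ} {β X : E3}
    {Ω C₃ δ ρ s : ℝ} (hβ : ‖β‖ = 1) (hi : LipschitzWith K ωi) (hj : LipschitzWith K ωj)
    (hiHom : ∀ s : ℝ, ωi (s • β) = s * ωi β) (hjHom : ∀ s : ℝ, ωj (s • β) = s * ωj β)
    (hΩ : (Ω : ℂ) * (ωj β - ωi β) = ωi β - ωN β) (hC₃ : 0 ≤ C₃) (hδ : 0 ≤ δ) (hδ₂ : δ ≤ 1 / 2)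
    (hsmall : 8 * (C₃ + K * δ) < ‖ωi β - ωj β‖ * min (1 + Ω) (-Ω)) (hρ : 1 ≤ ρ) (hs : s ≠ 0)
    (hX : X ∈ cone β (δ / ρ)) (hY : X - s • β ∈ cone β (δ / ρ))
    (hE : ‖ωi X - s * ωN β - ωj (X - s • β)‖ < C₃ * ‖X‖ / ρ) :
    ‖X‖ ≤ 4 * |s| ∧ ⟪X - s • β, β⟫ * ⟪X, β⟫ < 0 := by
  set u := ⟪X, β⟫
  set d := ‖ωi β - ωj β‖
  set e := ‖ωi X - s * ωN β - ωj (X - s • β)‖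
  have hρ₀ : 0 < ρ := one_pos.trans_le hρ
  have hdm : 0 < d * min (1 + Ω) (-Ω) := lt_of_le_of_lt (by positivity) hsmall
  have hd : 0 < d := pos_of_mul_pos_left hdm (pos_of_mul_pos_right hdm (norm_nonneg _)).le
  have hYu : ⟪X - s • β, β⟫ = u - s := by
    rw [inner_sub_left, real_inner_smul_left, real_inner_self_eq_norm_sq, hβ]; ring
  have hδρ : δ / ρ ≤ 1 / 2 := (div_le_self hδ hρ).trans hδ₂
  have hXu : ‖X‖ ≤ 2 * |u| := norm_le_two_mul_abs_inner_of_mem_cone hβ hδρ hX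
  have hYu' : ‖X - s • β‖ ≤ 2 * |u - s| := by
    simpa only [hYu] using norm_le_two_mul_abs_inner_of_mem_cone hβ hδρ hY
  have hXproj : ‖X - u • β‖ ≤ δ / ρ * ‖X‖ := norm_sub_inner_smul_le_of_mem_cone hβ hX
  have hYproj : ‖X - s • β - (u - s) • β‖ ≤ δ / ρ * ‖X - s • β‖ := by
    simpa only [hYu] using norm_sub_inner_smul_le_of_mem_cone hβ hY
  have hE' : e * ρ < C₃ * ‖X‖ := (lt_div_iff₀ hρ₀).1 hE
  have hres : |u - (1 + Ω) * s| * ρ * d ≤ 2 * (C₃ + K * δ) * (|u| + |u - s|) :=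
    calc |u - (1 + Ω) * s| * ρ * d
        = d * |u - (1 + Ω) * s| * ρ := by ring
      _ ≤ (e + K * (δ / ρ * ‖X‖ + δ / ρ * ‖X - s • β‖)) * ρ := by
          gcongr
          exact (norm_sub_mul_abs_le_of_lipschitzWith hi hj hiHom hjHom hΩ X u s).trans
            (by gcongr)
      _ = e * ρ + K * δ * (‖X‖ + ‖X - s • β‖) := by
          field_simp
      _ ≤ C₃ * (2 * |u|) + K * δ * (2 * |u| + 2 * |u - s|) := by
          have : K * δ * (‖X‖ + ‖X - s • β‖) ≤ K * δ * (2 * |u| + 2 * |u - s|) := by gcongr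
          nlinarith [mul_le_mul_of_nonneg_left hXu hC₃]
      _ ≤ 2 * (C₃ + K * δ) * (|u| + |u - s|) := by
          nlinarith [abs_nonneg (u - s)]
  obtain ⟨hus, hsign⟩ := abs_le_and_mul_sub_neg_of_abs_sub_mul_le
    (c := 2 * (C₃ + K * δ) / d) (by positivity)
    (by rw [← mul_div_assoc, div_lt_iff₀ hd]; linarith) hρ hs
    (by rw [div_mul_eq_mul_div, le_div_iff₀ hd]; exact hres)
  exact ⟨by linarith, by rw [hYu, mul_comm]; exact hsign⟩

section SignChange

variable {α : Type*} [Ring α] [LinearOrder α] [IsStrictOrderedRing α] {f : ℤ → α}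

theorem StrictMono.subsingleton_setOf_mul_neg (hf : StrictMono f) :
    {p : ℤ | f (p - 1) * f p < 0}.Subsingleton := by
  have hsign : ∀ {p}, f (p - 1) * f p < 0 → f (p - 1) < 0 ∧ 0 < f p := fun {p} h => by
    rcases mul_neg_iff.1 h with ⟨h₁, h₂⟩ | hneg
    · exact ((h₂.trans h₁).asymm (hf (sub_one_lt p))).elim
    · exact hneg
  have hnot_lt : ∀ {p q}, f (p - 1) * f p < 0 → f (q - 1) * f q < 0 → ¬p < q :=
    fun hp hq hpq =>
      lt_irrefl 0 (((hsign hp).2.trans_le (hf.monotone (Int.le_sub_one_of_lt hpq))).trans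
        (hsign hq).1)
  intro p hp q hq
  exact le_antisymm (not_lt.1 (hnot_lt hq hp)) (not_lt.1 (hnot_lt hp hq))

theorem StrictAnti.subsingleton_setOf_mul_neg (hf : StrictAnti f) :
    {p : ℤ | f (p - 1) * f p < 0}.Subsingleton := by
  simpa only [neg_mul_neg] using hf.neg.subsingleton_setOf_mul_neg

theorem Admissible.subsingleton_setOf_mul_neg {k : ℤ → ℤ} (hk : Admissible k) {g : ℤ → α}
    (hg : StrictMono g) : {p : ℤ | g (k (p - 1)) * g (k p) < 0}.Subsingleton :=
  hk.elim (fun h => (hg.comp h).subsingleton_setOf_mul_neg)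
    (fun h => (hg.comp_strictAnti h).subsingleton_setOf_mul_neg)

end SignChange

section Xk

variable {β ζ : E3} {ε : ℝ}

theorem inner_Xk (hβ : ‖β‖ = 1) (n : ℤ) : ⟪Xk β ζ ε n, β⟫ = ⟪ζ, β⟫ + n / ε := by
  rw [Xk, inner_add_left, real_inner_smul_left, real_inner_self_eq_norm_sq, hβ]
  ring

theorem strictMono_inner_Xk (hβ : ‖β‖ = 1) (hε : 0 < ε) :
    StrictMono fun n : ℤ => ⟪Xk β ζ ε n, β⟫ := fun m n hmn => by
  simp only [inner_Xk hβ]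
  gcongr

theorem Xk_sub_smul (m n : ℤ) : Xk β ζ ε m - (((m - n : ℤ) : ℝ) / ε) • β = Xk β ζ ε n := by
  simp only [Xk]
  push_cast
  module

end Xk

theorem norm_Xk_le_and_inner_mul_neg_of_exceptional {K : ℝ≥0} {ωi ωj ωN : E3 → ℂ}
    {β ζ : E3} {Ω C₃ δ ε : ℝ} {k : ℤ → ℤ} {p : ℤ} (hk : Admissible k) (hβ : ‖β‖ = 1)
    (hi : LipschitzWith K ωi) (hj : LipschitzWith K ωj)
    (hiHom : ∀ s : ℝ, ωi (s • β) = s * ωi β) (hjHom : ∀ s : ℝ, ωj (s • β) = s * ωj β)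
    (hΩ : (Ω : ℂ) * (ωj β - ωi β) = ωi β - ωN β) (hC₃ : 0 ≤ C₃) (hδ : 0 ≤ δ) (hδ₂ : δ ≤ 1 / 2)
    (hsmall : 8 * (C₃ + K * δ) < ‖ωi β - ωj β‖ * min (1 + Ω) (-Ω)) (hε : 0 < ε)
    (hX : Xk β ζ ε (k p) ∈ cone β (δ / ((|k p - k (p - 1)| : ℤ) : ℝ)))
    (hY : Xk β ζ ε (k (p - 1)) ∈ cone β (δ / ((|k p - k (p - 1)| : ℤ) : ℝ)))
    (hE : ¬ (C₃ * ‖Xk β ζ ε (k p)‖ / ((|k p - k (p - 1)| : ℤ) : ℝ) ≤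
        ‖Eij ωi ωj ωN β ε (k p) (k p - k (p - 1)) ζ‖)) :
    ‖Xk β ζ ε (k p)‖ ≤ 4 * ((|k p - k (p - 1)| : ℤ) : ℝ) / ε ∧
      ⟪Xk β ζ ε (k (p - 1)), β⟫ * ⟪Xk β ζ ε (k p), β⟫ < 0 := by
  set r := k p - k (p - 1)
  have hr : r ≠ 0 := sub_ne_zero.2 <|
    hk.elim (fun h => (h (sub_one_lt p)).ne') (fun h => (h (sub_one_lt p)).ne)
  have hY' : Xk β ζ ε (k p) - ((r : ℝ) / ε) • β = Xk β ζ ε (k (p - 1)) := Xk_sub_smul _ _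
  have hEij : Eij ωi ωj ωN β ε (k p) r ζ =
      ωi (Xk β ζ ε (k p)) - ((r / ε : ℝ) : ℂ) * ωN β -
        ωj (Xk β ζ ε (k p) - ((r : ℝ) / ε) • β) := by
    rw [Eij, hY', sub_sub_cancel]
    push_cast
    rfl
  have hρ : (1 : ℝ) ≤ ((|r| : ℤ) : ℝ) := by exact_mod_cast Int.one_le_abs hr
  obtain ⟨hnorm, hsign⟩ := norm_le_and_inner_mul_neg_of_mem_cone hβ hi hj hiHom hjHom hΩ hC₃ hδ
    hδ₂ hsmall hρ (div_ne_zero (Int.cast_ne_zero.2 hr) hε.ne') hX (hY' ▸ hY)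
    (hEij ▸ not_le.1 hE)
  refine ⟨hnorm.trans_eq ?_, hY' ▸ hsign⟩
  rw [abs_div, abs_of_pos hε, Int.cast_abs]
  ring

theorem stmt_9_general (βl : E3) (hβlu : ‖βl‖ = 1)
    (L : ℝ) (ωi ωj ωN : E3 → ℂ)
    (hiLip : LipschitzWith (Real.toNNReal L) ωi)
    (hjLip : LipschitzWith (Real.toNNReal L) ωj)
    (hiLin : ∀ s : ℝ, ωi (s • βl) = (s : ℂ) * ωi βl)
    (hjLin : ∀ s : ℝ, ωj (s • βl) = (s : ℂ) * ωj βl)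
    (hne : ωi βl ≠ ωj βl)
    (Ω : ℝ) (hΩdef : (Ω : ℂ) = (ωi βl - ωN βl) / (ωj βl - ωi βl))
    (hΩ1 : -1 < Ω) (hΩ2 : Ω < 0) :
    ∃ ε₀ > (0 : ℝ), ∃ δ₀ > (0 : ℝ), ∃ C₃ > (0 : ℝ), ∃ C₄ > (0 : ℝ),
      ∀ k : ℤ → ℤ, Admissible k →
      ∀ δ : ℝ, 0 < δ → δ ≤ δ₀ →
      ∀ ε : ℝ, 0 < ε → ε ≤ ε₀ →
      ∀ ζ ∈ Xi,
        Set.Subsingleton {p : ℤ |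
            Xk βl ζ ε (k p) ∈ cone βl (δ / ((|k p - k (p - 1)| : ℤ) : ℝ)) ∧
            Xk βl ζ ε (k (p - 1)) ∈ cone βl (δ / ((|k p - k (p - 1)| : ℤ) : ℝ)) ∧
            ¬ (C₃ * ‖Xk βl ζ ε (k p)‖ / ((|k p - k (p - 1)| : ℤ) : ℝ) ≤
                ‖Eij ωi ωj ωN βl ε (k p) (k p - k (p - 1)) ζ‖) ∧
            ¬ (C₃ * ‖Xk βl ζ ε (k (p - 1))‖ ≤
                ‖Eij ωi ωj ωN βl ε (k p) (k p - k (p - 1)) ζ‖)} ∧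
        ∀ p ∈ {p : ℤ |
            Xk βl ζ ε (k p) ∈ cone βl (δ / ((|k p - k (p - 1)| : ℤ) : ℝ)) ∧
            Xk βl ζ ε (k (p - 1)) ∈ cone βl (δ / ((|k p - k (p - 1)| : ℤ) : ℝ)) ∧
            ¬ (C₃ * ‖Xk βl ζ ε (k p)‖ / ((|k p - k (p - 1)| : ℤ) : ℝ) ≤
                ‖Eij ωi ωj ωN βl ε (k p) (k p - k (p - 1)) ζ‖) ∧
            ¬ (C₃ * ‖Xk βl ζ ε (k (p - 1))‖ ≤
                ‖Eij ωi ωj ωN βl ε (k p) (k p - k (p - 1)) ζ‖)},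
          ‖Xk βl ζ ε (k p)‖ ≤ C₄ * ((|k p - k (p - 1)| : ℤ) : ℝ) / ε := by
  have hΩ : (Ω : ℂ) * (ωj βl - ωi βl) = ωi βl - ωN βl :=
    (eq_div_iff (sub_ne_zero.2 hne.symm)).1 hΩdef
  set dm := ‖ωi βl - ωj βl‖ * min (1 + Ω) (-Ω)
  have hdm : 0 < dm :=
    mul_pos (norm_pos_iff.2 (sub_ne_zero.2 hne)) (lt_min (by linarith) (by linarith))
  refine ⟨1, one_pos, min (1 / 2) (dm / (16 * (L.toNNReal + 1))), by positivity, dm / 32,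
    by positivity, 4, four_pos, ?_⟩
  intro k hk δ hδ hδ₀ ε hε _ ζ _
  obtain ⟨hδ₂, hδK⟩ := le_min_iff.1 hδ₀
  have hsmall : 8 * (dm / 32 + L.toNNReal * δ) < dm := by
    rw [le_div_iff₀ (by positivity)] at hδK
    nlinarith
  have hexc := fun p => norm_Xk_le_and_inner_mul_neg_of_exceptional (ζ := ζ) (p := p) hk hβlu hiLip hjLip
    hiLin hjLin hΩ (by positivity) hδ.le hδ₂ hsmall hε
  exact ⟨(hk.subsingleton_setOf_mul_neg (strictMono_inner_Xk hβlu hε)).anti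
      fun p hp => (hexc p hp.1 hp.2.1 hp.2.2.1).2,
    fun p hp => (hexc p hp.1 hp.2.1 hp.2.2.1).1⟩

/-- When `Ω := (ω_i(β_l) − ω_N(β_l))/(ω_j(β_l) − ω_i(β_l)) ∈ (−1, 0)`, there are
`ε₀, δ₀, C₃, C₄ > 0`, independent of `ζ, ε, δ` and of the admissible sequence, such that
for each admissible sequence, each `δ ∈ (0, δ₀]`, `ε ∈ (0, ε₀]` and `ζ ∈ Ξ`, at most one index
`p` has `X_{k_p}, X_{k_{p−1}} ∈ Γ_{δ/|r_p|}(β_l)` while both lower bounds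
`|E_{i,j}| ≥ C₃|X_{k_p}|/|r_p|` and `|E_{i,j}| ≥ C₃|X_{k_{p−1}}|` fail; any such exceptional `p`
satisfies `|X_{k_p}| ≤ C₄|r_p|/ε`. -/
theorem stmt_9 (βl : E3) (hβlu : ‖βl‖ = 1) (hβl1 : βl 1 = 0)
    (L : ℝ) (hL : 0 < L) (ωi ωj ωN : E3 → ℂ)
    (hiLip : LipschitzWith (Real.toNNReal L) ωi)
    (hjLip : LipschitzWith (Real.toNNReal L) ωj)
    (hNLip : LipschitzWith (Real.toNNReal L) ωN)
    (hiLin : ∀ s : ℝ, ωi (s • βl) = (s : ℂ) * ωi βl)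
    (hjLin : ∀ s : ℝ, ωj (s • βl) = (s : ℂ) * ωj βl)
    (hNLin : ∀ s : ℝ, ωN (s • βl) = (s : ℂ) * ωN βl)
    (hne : ωi βl ≠ ωj βl)
    (Ω : ℝ) (hΩdef : (Ω : ℂ) = (ωi βl - ωN βl) / (ωj βl - ωi βl))
    (hΩ1 : -1 < Ω) (hΩ2 : Ω < 0) :
    ∃ ε₀ > (0 : ℝ), ∃ δ₀ > (0 : ℝ), ∃ C₃ > (0 : ℝ), ∃ C₄ > (0 : ℝ),
      ∀ k : ℤ → ℤ, Admissible k →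
      ∀ δ : ℝ, 0 < δ → δ ≤ δ₀ →
      ∀ ε : ℝ, 0 < ε → ε ≤ ε₀ →
      ∀ ζ ∈ Xi,
        Set.Subsingleton {p : ℤ |
            Xk βl ζ ε (k p) ∈ cone βl (δ / ((|k p - k (p - 1)| : ℤ) : ℝ)) ∧
            Xk βl ζ ε (k (p - 1)) ∈ cone βl (δ / ((|k p - k (p - 1)| : ℤ) : ℝ)) ∧
            ¬ (C₃ * ‖Xk βl ζ ε (k p)‖ / ((|k p - k (p - 1)| : ℤ) : ℝ) ≤
                ‖Eij ωi ωj ωN βl ε (k p) (k p - k (p - 1)) ζ‖) ∧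
            ¬ (C₃ * ‖Xk βl ζ ε (k (p - 1))‖ ≤
                ‖Eij ωi ωj ωN βl ε (k p) (k p - k (p - 1)) ζ‖)} ∧
        ∀ p ∈ {p : ℤ |
            Xk βl ζ ε (k p) ∈ cone βl (δ / ((|k p - k (p - 1)| : ℤ) : ℝ)) ∧
            Xk βl ζ ε (k (p - 1)) ∈ cone βl (δ / ((|k p - k (p - 1)| : ℤ) : ℝ)) ∧
            ¬ (C₃ * ‖Xk βl ζ ε (k p)‖ / ((|k p - k (p - 1)| : ℤ) : ℝ) ≤
                ‖Eij ωi ωj ωN βl ε (k p) (k p - k (p - 1)) ζ‖) ∧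
            ¬ (C₃ * ‖Xk βl ζ ε (k (p - 1))‖ ≤
                ‖Eij ωi ωj ωN βl ε (k p) (k p - k (p - 1)) ζ‖)},
          ‖Xk βl ζ ε (k p)‖ ≤ C₄ * ((|k p - k (p - 1)| : ℤ) : ℝ) / ε :=
  stmt_9_general βl hβlu L ωi ωj ωN hiLip hjLip hiLin hjLin hne Ω hΩdef hΩ1 hΩ2

end
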